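/- For any integer i: Θ(x;q)/(1 - xq^i) = f_{1,1,1}(q x^{-1}, q^{i+1}; q), where f_{1,1,1}(X,Y;q) = Σ_{r,s∈ℤ} sg(r,s) (-1)^{r+s} X^r Y^s q^{r(r-1)/2 + rs + s(s-1)/2}, Θ(x;q) = (x;q)_∞(q/x;q)_∞(q;q)_∞, valid for |q|<1 and x not an integral power of q. -/

import Mathlib

def sg (r : ℤ) : ℤ := if 0 ≤ r then 1 else -1

/-- `sg(r,s) = (sg(r)+sg(s))/2`, as a complex number. -/
noncomputable def sg2 (r s : ℤ) : ℂ := ((sg r + sg s : ℤ) : ℂ) / 2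

/-- The infinite q-Pochhammer symbol `(a;q)_∞ = ∏_{k≥0} (1 - a qᵏ)`. -/
noncomputable def qPoch (a q : ℂ) : ℂ := ∏' k : ℕ, (1 - a * q ^ k)

/-- The Jacobi theta function `Θ(x;q) = (x;q)_∞ (q/x;q)_∞ (q;q)_∞`. -/
noncomputable def Theta (x q : ℂ) : ℂ := qPoch x q * qPoch (q / x) q * qPoch q q

/-- The Hecke-type double sum `f_{a,b,c}(X,Y;q)`. -/
noncomputable def heckeF (a b c : ℤ) (X Y q : ℂ) : ℂ :=
  ∑' p : ℤ × ℤ, sg2 p.1 p.2 * (-1 : ℂ) ^ (p.1 + p.2) * X ^ p.1 * Y ^ p.2 *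
    q ^ (a * (p.1 * (p.1 - 1) / 2) + b * p.1 * p.2 + c * (p.2 * (p.2 - 1) / 2))

open Finset Filter Topology

/-!
Summing the double series along the diagonals `r + s = n` leaves finite geometric sums in `X`
and `Y`, and summation by parts gives
`(X - Y) f_{1,1,1}(X, Y; q) = X θ(X) - Y θ(Y)` with `θ(z) = ∑ₙ (-1)ⁿ q^(n(n-1)/2) zⁿ`.
For `Y = q^(i+1)` the series `θ(Y)` vanishes, since `n ↦ -2i-1-n` reverses the sign of its terms,
while `θ(q/x) = θ(x)` by `n ↦ -n`. Finally `θ(x) = Θ(x;q)` is the Jacobi triple product, the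
limit of Cauchy's finite form `(x;q)_N (q/x;q)_N = ∑ₘ (-1)ᵐ q^(m(m-1)/2) xᵐ [2N, N+m]_q`, which
follows from the `q`-binomial theorem; the passage to the limit is dominated convergence.
-/

theorem mul_sub_one_ediv_two_add (r s : ℤ) :
    (r + s) * (r + s - 1) / 2 = r * (r - 1) / 2 + r * s + s * (s - 1) / 2 := by
  have := Int.two_mul_ediv_two_of_even (Int.even_mul_pred_self (r + s))
  have := Int.two_mul_ediv_two_of_even (Int.even_mul_pred_self r)
  have := Int.two_mul_ediv_two_of_even (Int.even_mul_pred_self s)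
  linarith [show (r + s) * (r + s - 1) = r * (r - 1) + 2 * (r * s) + s * (s - 1) by ring]

theorem neg_mul_sub_one_ediv_two (m : ℤ) : -m * (-m - 1) / 2 = m * (m - 1) / 2 + m := by
  grind [Int.two_mul_ediv_two_of_even, Int.even_mul_pred_self]

theorem natCast_mul_sub_one_ediv_two (n : ℕ) : (n : ℤ) * (n - 1) / 2 = n.choose 2 := by
  rw [Nat.choose_two_right]
  grind [Int.two_mul_ediv_two_of_even, Int.even_mul_pred_self]

theorem summable_of_norm_succ_le_mul_pow {E : Type*} [SeminormedAddCommGroup E] [CompleteSpace E]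
    {f : ℕ → E} {C ρ : ℝ} (hρ0 : 0 ≤ ρ) (hρ : ρ < 1)
    (hf : ∀ n, ‖f (n + 1)‖ ≤ C * ρ ^ n * ‖f n‖) : Summable f := by
  have hlim : Tendsto (fun n => C * ρ ^ n) atTop (𝓝 0) := by
    simpa using (tendsto_pow_atTop_nhds_zero_of_lt_one hρ0 hρ).const_mul C
  refine summable_of_ratio_norm_eventually_le (r := 1 / 2) (by norm_num) ?_
  filter_upwards [hlim.eventually (eventually_le_nhds (by norm_num : (0 : ℝ) < 1 / 2))] with n hn
  exact (hf n).trans (mul_le_mul_of_nonneg_right hn (norm_nonneg _))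

noncomputable def thetaTerm (q x : ℂ) (m : ℤ) : ℂ := q ^ (m * (m - 1) / 2) * (-x) ^ m

section ThetaTerm

variable {q : ℂ}

theorem thetaTerm_neg (hq : q ≠ 0) (x : ℂ) (m : ℤ) :
    thetaTerm q x (-m) = thetaTerm q (q * x⁻¹) m := by
  rw [thetaTerm, thetaTerm, neg_mul_sub_one_ediv_two, zpow_add₀ hq, zpow_neg, ← inv_zpow,
    mul_assoc, ← mul_zpow]
  congr 2
  rw [inv_neg, mul_neg]

theorem thetaTerm_eq_mul_zpow (q x : ℂ) (m : ℤ) : thetaTerm q x m = thetaTerm q 1 m * x ^ m := by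
  rw [thetaTerm, thetaTerm, neg_eq_neg_one_mul x, mul_zpow]
  ring

theorem thetaTerm_natCast_add_one (hq : q ≠ 0) (x : ℂ) (n : ℕ) :
    thetaTerm q x (n + 1 : ℕ) = q ^ n * (-x) * thetaTerm q x n := by
  have htri : ((n + 1 : ℕ) : ℤ) * ((n + 1 : ℕ) - 1) / 2 = n * (n - 1) / 2 + n := by
    simpa using mul_sub_one_ediv_two_add (n : ℤ) 1
  rw [thetaTerm, thetaTerm, htri, zpow_add₀ hq, zpow_natCast, zpow_natCast, zpow_natCast,
    pow_succ]
  ring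

theorem thetaTerm_add (hq : q ≠ 0) {x : ℂ} (hx : x ≠ 0) (a b : ℤ) :
    thetaTerm q x (a + b) = q ^ (a * b) * thetaTerm q x a * thetaTerm q x b := by
  rw [thetaTerm, thetaTerm, thetaTerm, mul_sub_one_ediv_two_add, zpow_add₀ hq, zpow_add₀ hq,
    zpow_add₀ (neg_ne_zero.mpr hx)]
  ring

theorem summable_norm_thetaTerm (hq0 : q ≠ 0) (hq : ‖q‖ < 1) (x : ℂ) :
    Summable fun m : ℤ => ‖thetaTerm q x m‖ := by
  have hnat : ∀ y : ℂ, Summable fun n : ℕ => ‖thetaTerm q y n‖ := fun y =>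
    summable_of_norm_succ_le_mul_pow (C := ‖y‖) (norm_nonneg q) hq fun n => by
      rw [norm_norm, norm_norm, thetaTerm_natCast_add_one hq0, norm_mul,
        norm_mul, norm_neg, norm_pow, mul_comm (‖q‖ ^ n)]
  refine Summable.of_nat_of_neg (hnat x) ?_
  simpa only [thetaTerm_neg hq0] using hnat (q * x⁻¹)

theorem tsum_thetaTerm_mul_inv (hq : q ≠ 0) (x : ℂ) :
    ∑' n, thetaTerm q (q * x⁻¹) n = ∑' n, thetaTerm q x n := by
  rw [← (Equiv.neg ℤ).tsum_eq (thetaTerm q x)]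
  simp only [Equiv.neg_apply, thetaTerm_neg hq]

theorem tsum_thetaTerm_zpow (hq : q ≠ 0) (k : ℤ) : ∑' n, thetaTerm q (q ^ k) n = 0 := by
  have hterm (n : ℤ) : thetaTerm q (q ^ k) n = (-1) ^ n * q ^ (n * (n - 1) / 2 + k * n) := by
    rw [thetaTerm, neg_eq_neg_one_mul, mul_zpow, ← zpow_mul, zpow_add₀ hq]
    ring
  have hanti (n : ℤ) : thetaTerm q (q ^ k) (1 - 2 * k - n) = -thetaTerm q (q ^ k) n := by
    have hsign : (-1 : ℂ) ^ (1 - 2 * k - n) = -(-1) ^ n := by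
      rw [show 1 - 2 * k - n = 1 + 2 * (-k - n) + n by ring, zpow_add₀ (by norm_num),
        zpow_add₀ (by norm_num), zpow_mul]
      norm_num
    have hexp : (1 - 2 * k - n) * (1 - 2 * k - n - 1) / 2 + k * (1 - 2 * k - n) =
        n * (n - 1) / 2 + k * n := by
      have := Int.two_mul_ediv_two_of_even (Int.even_mul_pred_self (1 - 2 * k - n))
      have := Int.two_mul_ediv_two_of_even (Int.even_mul_pred_self n)
      linarith [show (1 - 2 * k - n) * (1 - 2 * k - n - 1) =
        n * (n - 1) + 4 * k * n - 2 * k * (1 - 2 * k) by ring]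
    rw [hterm, hterm, hsign, hexp, neg_mul]
  have h := (Equiv.subLeft (1 - 2 * k)).tsum_eq (thetaTerm q (q ^ k))
  simp only [Equiv.subLeft_apply, hanti, tsum_neg] at h
  exact neg_eq_self.mp h

end ThetaTerm

def qPochPartial {R : Type*} [CommRing R] (a q : R) (n : ℕ) : R := ∏ k ∈ range n, (1 - a * q ^ k)

def gaussBinom {R : Type*} [CommRing R] (q : R) : ℕ → ℕ → R
  | _, 0 => 1
  | 0, _ + 1 => 0
  | n + 1, k + 1 => gaussBinom q n k + q ^ (k + 1) * gaussBinom q n (k + 1)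

namespace gaussBinom

variable {R : Type*} [CommRing R] (q : R)

@[simp] theorem zero_right (n : ℕ) : gaussBinom q n 0 = 1 := by cases n <;> rfl

theorem succ_succ (n k : ℕ) :
    gaussBinom q (n + 1) (k + 1) = gaussBinom q n k + q ^ (k + 1) * gaussBinom q n (k + 1) := rfl

theorem eq_zero_of_lt : ∀ {n k : ℕ}, n < k → gaussBinom q n k = 0
  | 0, _ + 1, _ => rfl
  | n + 1, k + 1, h => by
    rw [succ_succ, eq_zero_of_lt (by omega), eq_zero_of_lt (by omega), mul_zero, add_zero]

theorem mul_qPochPartial : ∀ {n k : ℕ}, k ≤ n →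
    gaussBinom q n k * qPochPartial q q k * qPochPartial q q (n - k) = qPochPartial q q n
  | n, 0, _ => by simp [qPochPartial]
  | n + 1, k + 1, h => by
    have hP (m : ℕ) : qPochPartial q q (m + 1) = qPochPartial q q m * (1 - q * q ^ m) :=
      prod_range_succ _ _
    obtain rfl | hk := (Nat.lt_succ_iff.mp h).eq_or_lt
    · have ih := mul_qPochPartial (n := k) le_rfl
      rw [Nat.sub_self] at ih
      rw [succ_succ, eq_zero_of_lt q k.lt_succ_self, Nat.sub_self, hP]
      linear_combination (1 - q * q ^ k) * ih
    · obtain ⟨d, rfl⟩ := Nat.exists_eq_add_of_lt hk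
      have ih₁ := mul_qPochPartial (n := k + d + 1) (k := k) (by omega)
      have ih₂ := mul_qPochPartial (n := k + d + 1) (k := k + 1) (by omega)
      rw [show k + d + 1 - k = d + 1 by omega, hP d] at ih₁
      rw [show k + d + 1 - (k + 1) = d by omega, hP k] at ih₂
      rw [show k + d + 1 + 1 - (k + 1) = d + 1 by omega, succ_succ, hP k, hP d, hP (k + d + 1)]
      linear_combination (1 - q * q ^ k) * ih₁ + q ^ (k + 1) * (1 - q * q ^ d) * ih₂

theorem eq_div {K : Type*} [Field K] {q : K} (hP : ∀ m, qPochPartial q q m ≠ 0) {n k : ℕ}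
    (h : k ≤ n) :
    gaussBinom q n k = qPochPartial q q n / (qPochPartial q q k * qPochPartial q q (n - k)) := by
  rw [eq_div_iff (mul_ne_zero (hP k) (hP _)), ← mul_assoc, mul_qPochPartial q h]

end gaussBinom

theorem prod_one_add_mul_pow_eq_sum {R : Type*} [CommRing R] (q z : R) (n : ℕ) :
    ∏ k ∈ range n, (1 + z * q ^ k) =
      ∑ j ∈ range (n + 1), q ^ j.choose 2 * gaussBinom q n j * z ^ j := by
  induction n generalizing z with
  | zero => simp
  | succ n ih =>
    have hc (j : ℕ) : q ^ (j + 1).choose 2 * gaussBinom q (n + 1) (j + 1) =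
        q ^ (j + 1) * (q ^ (j + 1).choose 2 * gaussBinom q n (j + 1)) +
          q ^ j * (q ^ j.choose 2 * gaussBinom q n j) := by
      rw [gaussBinom.succ_succ, Nat.choose_succ_succ' j, Nat.choose_one_right]
      ring
    have hshift : ∑ j ∈ range (n + 1), q ^ j.choose 2 * gaussBinom q n j * (z * q) ^ j =
        1 + ∑ j ∈ range (n + 1),
          q ^ (j + 1) * (q ^ (j + 1).choose 2 * gaussBinom q n (j + 1)) * z ^ (j + 1) := by
      rw [sum_range_succ', sum_range_succ _ n, gaussBinom.eq_zero_of_lt q n.lt_succ_self]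
      simp only [gaussBinom.zero_right, Nat.choose_zero_succ, mul_zero, zero_mul, add_zero,
        pow_zero, mul_one]
      rw [add_comm]
      exact congrArg _ (sum_congr rfl fun j _ => by ring)
    rw [prod_range_succ', prod_congr rfl fun k _ => by rw [pow_succ', ← mul_assoc], ih (z * q),
      sum_range_succ' _ (n + 1)]
    simp only [hc, add_mul, sum_add_distrib, gaussBinom.zero_right, pow_zero, mul_one,
      Nat.choose_zero_succ]
    rw [mul_add, mul_one, sum_mul, hshift, sum_congr rfl fun j _ =>
      show q ^ j.choose 2 * gaussBinom q n j * (z * q) ^ j * z =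
        q ^ j * (q ^ j.choose 2 * gaussBinom q n j) * z ^ (j + 1) by ring]
    ring

section JacobiTripleProduct

variable {q x : ℂ}

theorem thetaTerm_mul_prod_one_sub_mul_zpow (hq : q ≠ 0) (hx : x ≠ 0) (N : ℕ) :
    thetaTerm q (q * x⁻¹) N * ∏ k ∈ range N, (1 - x * q ^ ((k : ℤ) - N)) =
      qPochPartial (q * x⁻¹) q N := by
  induction N with
  | zero => simp [thetaTerm, qPochPartial]
  | succ N ih =>
    have hfirst : q ^ N * -(q * x⁻¹) * (1 - x * q ^ (((0 : ℕ) : ℤ) - (N + 1 : ℕ))) =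
        1 - q * x⁻¹ * q ^ N := by
      rw [Nat.cast_zero, zero_sub, zpow_neg, zpow_natCast, pow_succ]
      field_simp
      ring
    have hshift (k : ℕ) : ((k + 1 : ℕ) : ℤ) - (N + 1 : ℕ) = k - N := by push_cast; ring
    rw [thetaTerm_natCast_add_one hq, prod_range_succ', qPochPartial, prod_range_succ,
      ← qPochPartial, ← ih]
    simp only [hshift]
    linear_combination
      (thetaTerm q (q * x⁻¹) N * ∏ k ∈ range N, (1 - x * q ^ ((k : ℤ) - N))) * hfirst

theorem thetaTerm_natCast_sub (hq : q ≠ 0) (hx : x ≠ 0) (j N : ℕ) :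
    thetaTerm q x (j - N) =
      thetaTerm q (q * x⁻¹) N * (q ^ j.choose 2 * (-x * q ^ (-(N : ℤ))) ^ j) := by
  rw [sub_eq_add_neg, thetaTerm_add hq hx, thetaTerm_neg hq, thetaTerm,
    natCast_mul_sub_one_ediv_two, zpow_natCast, zpow_natCast, mul_pow, ← zpow_natCast (q ^ _),
    ← zpow_mul]
  ring_nf

theorem qPochPartial_mul_qPochPartial_mul_inv (hq : q ≠ 0) (hx : x ≠ 0) (N : ℕ) :
    qPochPartial x q N * qPochPartial (q * x⁻¹) q N =
      ∑ j ∈ range (2 * N + 1), gaussBinom q (2 * N) j * thetaTerm q x (j - N) := by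
  let z := -x * q ^ (-(N : ℤ))
  have hfirst : ∏ k ∈ range N, (1 + z * q ^ k) = ∏ k ∈ range N, (1 - x * q ^ ((k : ℤ) - N)) :=
    prod_congr rfl fun k _ => by
      simp only [z]
      rw [zpow_sub₀ hq, zpow_neg, zpow_natCast, zpow_natCast]
      ring
  have hsecond : ∏ k ∈ range N, (1 + z * q ^ (N + k)) = qPochPartial x q N :=
    prod_congr rfl fun k _ => by
      simp only [z]
      rw [zpow_neg, zpow_natCast, pow_add]
      field_simp
      ring
  have hbinom := prod_one_add_mul_pow_eq_sum q z (2 * N)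
  rw [two_mul N, prod_range_add, hfirst, hsecond, ← two_mul] at hbinom
  rw [← thetaTerm_mul_prod_one_sub_mul_zpow hq hx, mul_left_comm, mul_comm (qPochPartial x q N),
    hbinom, mul_sum]
  refine sum_congr rfl fun j _ => ?_
  rw [thetaTerm_natCast_sub hq hx]
  ring

theorem summable_norm_neg_mul_pow (hq : ‖q‖ < 1) (a : ℂ) :
    Summable fun k : ℕ => ‖-(a * q ^ k)‖ := by
  simpa only [norm_neg, norm_mul, norm_pow] using
    (summable_geometric_of_lt_one (norm_nonneg q) hq).mul_left ‖a‖

theorem multipliable_one_sub_mul_pow (hq : ‖q‖ < 1) (a : ℂ) :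
    Multipliable fun k : ℕ => 1 - a * q ^ k := by
  simpa only [← sub_eq_add_neg] using
    multipliable_one_add_of_summable (summable_norm_neg_mul_pow hq a)

theorem tendsto_qPochPartial (hq : ‖q‖ < 1) (a : ℂ) :
    Tendsto (qPochPartial a q) atTop (𝓝 (qPoch a q)) :=
  (multipliable_one_sub_mul_pow hq a).hasProd.tendsto_prod_nat

theorem one_sub_mul_pow_ne_zero (hq : ‖q‖ < 1) (k : ℕ) : 1 - q * q ^ k ≠ 0 := by
  rw [sub_ne_zero, ne_comm, ← pow_succ']
  exact fun h =>
    (pow_lt_one₀ (norm_nonneg q) hq k.succ_ne_zero).ne (by rw [← norm_pow, h, norm_one])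

theorem qPoch_self_ne_zero (hq : ‖q‖ < 1) : qPoch q q ≠ 0 := by
  have hfactor (k : ℕ) : 1 + -(q * q ^ k) ≠ 0 := by
    simpa only [← sub_eq_add_neg] using one_sub_mul_pow_ne_zero hq k
  simpa only [qPoch, ← sub_eq_add_neg] using
    tprod_one_add_ne_zero_of_summable hfactor (summable_norm_neg_mul_pow hq q)

theorem qPochPartial_self_ne_zero (hq : ‖q‖ < 1) (n : ℕ) : qPochPartial q q n ≠ 0 :=
  prod_ne_zero_iff.mpr fun k _ => one_sub_mul_pow_ne_zero hq k

theorem exists_norm_gaussBinom_le (hq : ‖q‖ < 1) : ∃ K, ∀ n k, ‖gaussBinom q n k‖ ≤ K := by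
  have hP := tendsto_qPochPartial hq q
  obtain ⟨B, hB⟩ := hP.norm.bddAbove_range
  obtain ⟨C, hC⟩ := (hP.norm.inv₀ (norm_ne_zero_iff.mpr (qPoch_self_ne_zero hq))).bddAbove_range
  have hB' (n : ℕ) : ‖qPochPartial q q n‖ ≤ B := hB ⟨n, rfl⟩
  have hC' (n : ℕ) : ‖qPochPartial q q n‖⁻¹ ≤ C := hC ⟨n, rfl⟩
  have hB0 : 0 ≤ B := (norm_nonneg _).trans (hB' 0)
  have hC0 : 0 ≤ C := (inv_nonneg.mpr (norm_nonneg _)).trans (hC' 0)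
  refine ⟨B * (C * C), fun n k => ?_⟩
  rcases le_or_gt k n with h | h
  · rw [gaussBinom.eq_div (qPochPartial_self_ne_zero hq) h, norm_div, norm_mul, div_eq_mul_inv,
      mul_inv]
    exact mul_le_mul (hB' n) (mul_le_mul (hC' k) (hC' _) (by positivity) hC0) (by positivity) hB0
  · rw [gaussBinom.eq_zero_of_lt q h, norm_zero]
    exact mul_nonneg hB0 (mul_nonneg hC0 hC0)

noncomputable def jacobiCoeff (q : ℂ) (N : ℕ) (m : ℤ) : ℂ :=
  if -(N : ℤ) ≤ m then qPochPartial q q N * gaussBinom q (2 * N) (m + N).toNat else 0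

theorem tendsto_jacobiCoeff (hq : ‖q‖ < 1) (m : ℤ) :
    Tendsto (fun N => jacobiCoeff q N m) atTop (𝓝 1) := by
  have hP := tendsto_qPochPartial hq q
  have hP0 := mul_ne_zero (qPoch_self_ne_zero hq) (qPoch_self_ne_zero hq)
  have h₁ : Tendsto (fun N : ℕ => 2 * N) atTop atTop :=
    tendsto_atTop_atTop.mpr fun b => ⟨b, fun N hN => by omega⟩
  have h₂ : Tendsto (fun N : ℕ => (m + N).toNat) atTop atTop :=
    tendsto_atTop_atTop.mpr fun b => ⟨b + m.natAbs, fun N hN => by omega⟩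
  have h₃ : Tendsto (fun N : ℕ => 2 * N - (m + N).toNat) atTop atTop :=
    tendsto_atTop_atTop.mpr fun b => ⟨b + m.natAbs, fun N hN => by omega⟩
  have hlim := (hP.mul (hP.comp h₁)).div ((hP.comp h₂).mul (hP.comp h₃)) hP0
  rw [div_self hP0] at hlim
  refine hlim.congr' ?_
  filter_upwards [eventually_ge_atTop m.natAbs] with N hN
  simp only [Pi.div_apply, Function.comp_apply, jacobiCoeff, if_pos (show -(N : ℤ) ≤ m by omega),
    gaussBinom.eq_div (qPochPartial_self_ne_zero hq) (show (m + N).toNat ≤ 2 * N by omega),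
    mul_div_assoc]

theorem exists_norm_jacobiCoeff_le (hq : ‖q‖ < 1) : ∃ K, ∀ N m, ‖jacobiCoeff q N m‖ ≤ K := by
  obtain ⟨B, hB⟩ := (tendsto_qPochPartial hq q).norm.bddAbove_range
  obtain ⟨K, hK⟩ := exists_norm_gaussBinom_le hq
  have hK0 : 0 ≤ K := (norm_nonneg _).trans (hK 0 0)
  refine ⟨B * K, fun N m => ?_⟩
  have hB' : ‖qPochPartial q q N‖ ≤ B := hB ⟨N, rfl⟩
  unfold jacobiCoeff
  split_ifs
  · rw [norm_mul]
    exact mul_le_mul hB' (hK _ _) (norm_nonneg _) ((norm_nonneg _).trans hB')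
  · rw [norm_zero]
    exact mul_nonneg ((norm_nonneg _).trans hB') hK0

theorem qPochPartial_mul_mul_eq_tsum (hq : q ≠ 0) (hx : x ≠ 0) (N : ℕ) :
    qPochPartial x q N * qPochPartial (q * x⁻¹) q N * qPochPartial q q N =
      ∑' m, thetaTerm q x m * jacobiCoeff q N m := by
  have hsupp : Function.support (fun m => thetaTerm q x m * jacobiCoeff q N m) ⊆
      Set.range fun j : ℕ => (j : ℤ) - N := by
    intro m hm
    have : -(N : ℤ) ≤ m := by
      by_contra h
      exact hm (by simp [jacobiCoeff, h])
    exact ⟨(m + N).toNat, show ((m + N).toNat : ℤ) - N = m by omega⟩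
  have hinj : Function.Injective fun j : ℕ => (j : ℤ) - N := fun a b h => by simpa using h
  rw [← hinj.tsum_eq hsupp,
    tsum_eq_sum (s := range (2 * N + 1)), qPochPartial_mul_qPochPartial_mul_inv hq hx, sum_mul]
  · refine sum_congr rfl fun j _ => ?_
    rw [jacobiCoeff, if_pos (by omega), show ((j : ℤ) - N + N).toNat = j by omega]
    ring
  · intro j hj
    rw [mem_range, not_lt] at hj
    rw [jacobiCoeff, if_pos (by omega), show ((j : ℤ) - N + N).toNat = j by omega,
      gaussBinom.eq_zero_of_lt q (by omega), mul_zero, mul_zero]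

theorem Theta_eq_tsum_thetaTerm (hq0 : q ≠ 0) (hq : ‖q‖ < 1) (hx : x ≠ 0) :
    Theta x q = ∑' m, thetaTerm q x m := by
  obtain ⟨K, hK⟩ := exists_norm_jacobiCoeff_le hq
  have hprod : Tendsto (fun N => qPochPartial x q N * qPochPartial (q * x⁻¹) q N *
      qPochPartial q q N) atTop (𝓝 (Theta x q)) := by
    rw [Theta, div_eq_mul_inv]
    exact ((tendsto_qPochPartial hq x).mul (tendsto_qPochPartial hq _)).mul
      (tendsto_qPochPartial hq q)
  have hsum : Tendsto (fun N => ∑' m, thetaTerm q x m * jacobiCoeff q N m) atTop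
      (𝓝 (∑' m, thetaTerm q x m)) := by
    refine tendsto_tsum_of_dominated_convergence ((summable_norm_thetaTerm hq0 hq x).mul_right K)
      (fun m => by simpa using (tendsto_jacobiCoeff hq m).const_mul (thetaTerm q x m))
      (.of_forall fun N m => ?_)
    rw [norm_mul]
    exact mul_le_mul_of_nonneg_left (hK N m) (norm_nonneg _)
  exact tendsto_nhds_unique (hprod.congr (qPochPartial_mul_mul_eq_tsum hq0 hx)) hsum

end JacobiTripleProduct

theorem sg2_sub_eq_ite (n r : ℤ) :
    sg2 r (n - r) = (if 0 ≤ r then 1 else 0) - (if n < r then 1 else 0) := by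
  unfold sg2 sg
  split_ifs <;> first | omega | norm_num

theorem sg2_sub_eq_zero_of_natAbs_lt {n r : ℤ} (h : n.natAbs < r.natAbs) : sg2 r (n - r) = 0 := by
  rw [sg2_sub_eq_ite]
  split_ifs <;> first | omega | norm_num

theorem sg2_sub_sub_sg2_add_one_sub (n r : ℤ) :
    sg2 r (n - r) - sg2 (r + 1) (n - (r + 1)) =
      (if r = n then 1 else 0) - (if r = -1 then 1 else 0) := by
  rw [sg2_sub_eq_ite, sg2_sub_eq_ite]
  split_ifs <;> first | omega | norm_num

theorem norm_sg2_mul_zpow_mul_le_one {q : ℂ} (hq0 : q ≠ 0) (hq : ‖q‖ ≤ 1) (r s : ℤ) :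
    ‖sg2 r s * q ^ (r * s)‖ ≤ 1 := by
  have hpow (h : 0 ≤ r * s) : ‖q‖ ^ (r * s) ≤ 1 := zpow_le_one₀ (norm_pos_iff.mpr hq0) hq h
  rw [norm_mul, norm_zpow]
  rcases le_or_gt 0 r with hr | hr <;> rcases le_or_gt 0 s with hs | hs
  · simpa [sg2, sg, hr, hs] using hpow (mul_nonneg hr hs)
  · simp [sg2, sg, hr, hs.not_ge]
  · simp [sg2, sg, hr.not_ge, hs]
  · simpa [sg2, sg, hr.not_ge, hs.not_ge] using hpow (mul_pos_of_neg_of_neg hr hs).le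

theorem summable_sg2_sub_mul (n : ℤ) (f : ℤ → ℂ) : Summable fun r => sg2 r (n - r) * f r := by
  refine summable_of_ne_finset_zero (s := Finset.Icc (-(n.natAbs : ℤ)) n.natAbs) fun r hr => ?_
  rw [sg2_sub_eq_zero_of_natAbs_lt (by rw [Finset.mem_Icc] at hr; omega), zero_mul]

theorem sub_mul_tsum_sg2_sub {X Y : ℂ} (hX : X ≠ 0) (hY : Y ≠ 0) (n : ℤ) :
    (X - Y) * ∑' r, sg2 r (n - r) * (X ^ r * Y ^ (n - r)) = X ^ (n + 1) - Y ^ (n + 1) := by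
  set h : ℤ → ℂ := fun r => X ^ r * Y ^ (n + 1 - r) with h_def
  have htel (r : ℤ) : (X - Y) * (X ^ r * Y ^ (n - r)) = h (r + 1) - h r := by
    simp only [h_def]
    rw [zpow_add_one₀ hX, show n + 1 - r = n - r + 1 by ring, zpow_add_one₀ hY,
      show n + 1 - (r + 1) = n - r by ring]
    ring
  have hF := summable_sg2_sub_mul n h
  have hF' : Summable fun r => sg2 (r + 1) (n - (r + 1)) * h (r + 1) :=
    hF.comp_injective (add_left_injective 1)
  have hshift : ∑' r, sg2 r (n - r) * h r = ∑' r, sg2 (r + 1) (n - (r + 1)) * h (r + 1) :=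
    ((Equiv.addRight (1 : ℤ)).tsum_eq (fun r => sg2 r (n - r) * h r)).symm
  calc (X - Y) * ∑' r, sg2 r (n - r) * (X ^ r * Y ^ (n - r))
      = ∑' r, sg2 r (n - r) * h (r + 1) - ∑' r, sg2 r (n - r) * h r := by
        rw [← tsum_mul_left, ← (summable_sg2_sub_mul n _).tsum_sub hF]
        congr 1 with r
        rw [mul_left_comm, htel, mul_sub]
    -- summation by parts: `r ↦ sg2 r (n - r)` jumps only at `r = 0` and `r = n + 1`
    _ = ∑' r, ((if r = n then h (n + 1) else 0) - (if r = -1 then h 0 else 0)) := by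
        rw [hshift, ← (summable_sg2_sub_mul n _).tsum_sub hF']
        congr 1 with r
        rw [← sub_mul, sg2_sub_sub_sg2_add_one_sub]
        split_ifs <;> subst_vars <;> simp
    _ = X ^ (n + 1) - Y ^ (n + 1) := by
        rw [(hasSum_ite_eq n _).summable.tsum_sub (hasSum_ite_eq (-1) _).summable, tsum_ite_eq,
          tsum_ite_eq, h_def]
        simp

noncomputable def heckeTerm (a b c : ℤ) (X Y q : ℂ) (p : ℤ × ℤ) : ℂ :=
  sg2 p.1 p.2 * (-1 : ℂ) ^ (p.1 + p.2) * X ^ p.1 * Y ^ p.2 *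
    q ^ (a * (p.1 * (p.1 - 1) / 2) + b * p.1 * p.2 + c * (p.2 * (p.2 - 1) / 2))

theorem heckeF_eq_tsum_heckeTerm (a b c : ℤ) (X Y q : ℂ) :
    heckeF a b c X Y q = ∑' p, heckeTerm a b c X Y q p := rfl

section Hecke

variable {q : ℂ}

theorem heckeTerm_one_one_one (hq : q ≠ 0) (X Y : ℂ) (r s : ℤ) :
    heckeTerm 1 1 1 X Y q (r, s) =
      sg2 r s * q ^ (r * s) * (thetaTerm q X r * thetaTerm q Y s) := by
  rw [heckeTerm, thetaTerm_eq_mul_zpow q X, thetaTerm_eq_mul_zpow q Y, thetaTerm, thetaTerm,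
    zpow_add₀ (by norm_num : (-1 : ℂ) ≠ 0)]
  simp only [one_mul]
  rw [zpow_add₀ hq, zpow_add₀ hq]
  ring

theorem heckeTerm_one_one_one_sub (hq : q ≠ 0) (X Y : ℂ) (n r : ℤ) :
    heckeTerm 1 1 1 X Y q (r, n - r) =
      thetaTerm q 1 n * (sg2 r (n - r) * (X ^ r * Y ^ (n - r))) := by
  rw [heckeTerm_one_one_one hq, thetaTerm_eq_mul_zpow q X, thetaTerm_eq_mul_zpow q Y]
  have hn := thetaTerm_add hq one_ne_zero r (n - r)
  rw [add_sub_cancel] at hn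
  rw [hn]
  ring

theorem summable_heckeTerm_one_one_one (hq0 : q ≠ 0) (hq : ‖q‖ < 1) (X Y : ℂ) :
    Summable (heckeTerm 1 1 1 X Y q) := by
  refine .of_norm_bounded ((summable_norm_thetaTerm hq0 hq X).mul_of_nonneg
    (summable_norm_thetaTerm hq0 hq Y) (fun _ => norm_nonneg _) (fun _ => norm_nonneg _)) ?_
  rintro ⟨r, s⟩
  rw [heckeTerm_one_one_one hq0, norm_mul _ (_ * _), norm_mul (thetaTerm q X r)]
  exact mul_le_of_le_one_left (by positivity) (norm_sg2_mul_zpow_mul_le_one hq0 hq.le r s)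

theorem sub_mul_heckeF_one_one_one (hq0 : q ≠ 0) (hq : ‖q‖ < 1) {X Y : ℂ} (hX : X ≠ 0)
    (hY : Y ≠ 0) :
    (X - Y) * heckeF 1 1 1 X Y q = X * ∑' n, thetaTerm q X n - Y * ∑' n, thetaTerm q Y n := by
  let diag : ℤ × ℤ ≃ ℤ × ℤ :=
    { toFun := fun p => (p.2, p.1 - p.2), invFun := fun p => (p.1 + p.2, p.1),
      left_inv := fun p => by simp, right_inv := fun p => by simp }
  have hdiag : Summable fun p => heckeTerm 1 1 1 X Y q (diag p) :=
    diag.summable_iff.mpr (summable_heckeTerm_one_one_one hq0 hq X Y)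
  have hθ (x : ℂ) : Summable (thetaTerm q x) := (summable_norm_thetaTerm hq0 hq x).of_norm
  rw [heckeF_eq_tsum_heckeTerm, ← diag.tsum_eq, hdiag.tsum_prod, ← tsum_mul_left,
    ← tsum_mul_left, ← tsum_mul_left, ← ((hθ X).mul_left X).tsum_sub ((hθ Y).mul_left Y)]
  congr 1 with n
  simp only [diag, Equiv.coe_fn_mk, heckeTerm_one_one_one_sub hq0, tsum_mul_left]
  rw [mul_left_comm, sub_mul_tsum_sg2_sub hX hY, thetaTerm_eq_mul_zpow q X,
    thetaTerm_eq_mul_zpow q Y, zpow_add_one₀ hX, zpow_add_one₀ hY]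
  ring

end Hecke

theorem stmt11 (q x : ℂ) (hq0 : 0 < ‖q‖) (hq : ‖q‖ < 1) (hx : x ≠ 0)
    (hgen : ∀ k : ℤ, 1 - x * q ^ k ≠ 0) (i : ℤ) :
    Theta x q / (1 - x * q ^ i) = heckeF 1 1 1 (q * x⁻¹) (q ^ (i + 1)) q := by
  have hq' : q ≠ 0 := norm_pos_iff.mp hq0
  have hX : q * x⁻¹ ≠ 0 := mul_ne_zero hq' (inv_ne_zero hx)
  have hfactor : q * x⁻¹ - q ^ (i + 1) = q * x⁻¹ * (1 - x * q ^ i) := by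
    rw [zpow_add_one₀ hq']
    field_simp
  have key := sub_mul_heckeF_one_one_one hq' hq hX (zpow_ne_zero (i + 1) hq')
  rw [tsum_thetaTerm_zpow hq', tsum_thetaTerm_mul_inv hq', ← Theta_eq_tsum_thetaTerm hq' hq hx,
    mul_zero, sub_zero, hfactor, mul_assoc] at key
  rw [div_eq_iff (hgen i), ← mul_left_cancel₀ hX key]
  ring
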